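/- arXiv:1505.03789 — 2 statements merged into one kernel-verified Lean document; each statement's English description precedes it below -/
import Mathlib

section
/- For a random variable Q with density p(Q) = δ^{-1} Q^{M-1} g(Q) on (0,∞), where g is positive and differentiable, the expectation E[Q φ(Q)^2] with φ(Q) = -g'(Q)/g(Q) satisfies: if E[Q^{-1}] = ∞ then E[Q φ(Q)^2] = ∞. -/
/-!
Since `p = δ⁻¹ Q^(M-1) g`, the density satisfies `p' = ((M-1)/Q - φ) p` on `(0,∞)`. The pointwise
AM-GM inequality `2 φ p ≤ Q φ² p / c + c p / Q` with `c = M - 1` turns this into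
`-p' ≤ Q φ² p / (2c) - (c/2) p / Q`, and integrating over `[a, 1]` gives
`(c/2) ∫_a^1 p / Q ≤ p 1 + E[Q φ²] / (2c)` uniformly in `a > 0`. So a finite `E[Q φ²]` forces
`E[Q⁻¹]` to be finite near `0`; near `∞` it is bounded by the total mass. Both conditions are
insensitive to the normalising factor `δ⁻¹`, which is nonzero because `E[Q⁻¹] = ∞`.
-/

open MeasureTheory Real Set Filter

lemma two_mul_mul_le_mul_sq_div_add_mul_inv_mul {u q x c : ℝ} (hq : 0 ≤ q) (hx : 0 < x)
    (hc : 0 < c) : 2 * (u * q) ≤ x * u ^ 2 * q / c + c * (x⁻¹ * q) := by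
  have hsq : 0 ≤ q * (x * u - c) ^ 2 / (x * c) := by positivity
  have hexpand : q * (x * u - c) ^ 2 / (x * c)
      = x * u ^ 2 * q / c + c * (x⁻¹ * q) - 2 * (u * q) := by
    field_simp
    ring
  linarith

lemma hasDerivAt_pow_mul {g : ℝ → ℝ} {x : ℝ} (n : ℕ) (hx : 0 < x) (hg : DifferentiableAt ℝ g x)
    (hgx : g x ≠ 0) :
    HasDerivAt (fun t => t ^ n * g t) ((n * x⁻¹ - -deriv g x / g x) * (x ^ n * g x)) x := by
  refine ((hasDerivAt_pow n x).mul hg.hasDerivAt).congr_deriv ?_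
  rcases n with _ | n
  · simp [div_mul_cancel₀ _ hgx]
  · field_simp
    push_cast
    ring

lemma integrableOn_inv_mul_Ioi_of_integrableOn {f : ℝ → ℝ} {b : ℝ} (hb : 0 < b)
    (hf : IntegrableOn f (Ioi b)) : IntegrableOn (fun x => x⁻¹ * f x) (Ioi b) := by
  refine hf.bdd_mul (c := b⁻¹) ?_ ?_
  · exact (continuousOn_inv₀.mono fun x hx => (hb.trans hx).ne').aestronglyMeasurable
      measurableSet_Ioi
  · filter_upwards [ae_restrict_mem measurableSet_Ioi] with x hx
    rw [norm_inv, Real.norm_of_nonneg (hb.trans hx).le]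
    exact inv_anti₀ hb hx.le

section InverseMoment

variable {p φ : ℝ → ℝ} {a b c : ℝ}

lemma integrableOn_inv_mul_Icc (hderiv : ∀ x ∈ Ioc 0 b, HasDerivAt p ((c * x⁻¹ - φ x) * p x) x)
    (ha : 0 < a) : IntegrableOn (fun x => x⁻¹ * p x) (Icc a b) := by
  have hpos : ∀ x ∈ Icc a b, 0 < x := fun x hx => ha.trans_le hx.1
  refine ContinuousOn.integrableOn_Icc fun x hx => ?_
  exact ((continuousAt_inv₀ (hpos x hx).ne').mul
    (hderiv x ⟨hpos x hx, hx.2⟩).continuousAt).continuousWithinAt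

lemma mul_intervalIntegral_inv_mul_le (hc : 0 < c)
    (hderiv : ∀ x ∈ Ioc 0 b, HasDerivAt p ((c * x⁻¹ - φ x) * p x) x)
    (hp : ∀ x ∈ Ioc 0 b, 0 ≤ p x)
    (hfisher : IntegrableOn (fun x => x * φ x ^ 2 * p x) (Ioc 0 b)) (ha : 0 < a) (hab : a ≤ b) :
    c / 2 * ∫ x in a..b, x⁻¹ * p x
      ≤ p b + (2 * c)⁻¹ * ∫ x in Ioc 0 b, x * φ x ^ 2 * p x := by
  have hIcc : Icc a b ⊆ Ioc 0 b := fun x hx => ⟨ha.trans_le hx.1, hx.2⟩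
  have hinv := integrableOn_inv_mul_Icc hderiv ha
  have hfisher_ab := hfisher.mono_set hIcc
  have hcont : ContinuousOn p (Icc a b) := fun x hx =>
    (hderiv x (hIcc hx)).continuousAt.continuousWithinAt
  have hFTC := intervalIntegral.sub_le_integral_of_hasDeriv_right_of_le hab hcont.neg
    (fun x hx => (hderiv x (hIcc (Ioo_subset_Icc_self hx))).neg.hasDerivWithinAt)
    ((hfisher_ab.const_mul (2 * c)⁻¹).sub (hinv.const_mul (c / 2))) fun x hx => by
      have hamgm := two_mul_mul_le_mul_sq_div_add_mul_inv_mul (u := φ x)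
        (hp x (hIcc (Ioo_subset_Icc_self hx))) (ha.trans hx.1) hc
      have hscale : x * φ x ^ 2 * p x / c = 2 * ((2 * c)⁻¹ * (x * φ x ^ 2 * p x)) := by
        field_simp
      simp only [Pi.sub_apply]
      linarith
  have hI : IntervalIntegrable (fun x => x⁻¹ * p x) volume a b :=
    (intervalIntegrable_iff_integrableOn_Icc_of_le hab).2 hinv
  have hF : IntervalIntegrable (fun x => x * φ x ^ 2 * p x) volume a b :=
    (intervalIntegrable_iff_integrableOn_Icc_of_le hab).2 hfisher_ab
  simp only [Pi.sub_apply, Pi.neg_apply] at hFTC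
  rw [intervalIntegral.integral_sub (hF.const_mul _) (hI.const_mul _),
    intervalIntegral.integral_const_mul, intervalIntegral.integral_const_mul] at hFTC
  have hmono : ∫ x in a..b, x * φ x ^ 2 * p x ≤ ∫ x in Ioc 0 b, x * φ x ^ 2 * p x := by
    rw [intervalIntegral.integral_of_le hab]
    refine setIntegral_mono_set hfisher ?_ (Ioc_subset_Ioc_left ha.le).eventuallyLE
    filter_upwards [ae_restrict_mem measurableSet_Ioc] with x hx
    exact mul_nonneg (mul_nonneg hx.1.le (sq_nonneg _)) (hp x hx)
  have hpa := hp a ⟨ha, hab⟩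
  have hmono_scaled :=
    mul_le_mul_of_nonneg_left hmono (inv_nonneg.2 (by positivity : (0 : ℝ) ≤ 2 * c))
  linarith

theorem integrableOn_inv_mul_Ioc_of_integrableOn_fisher (hc : 0 < c) (hb : 0 < b)
    (hderiv : ∀ x ∈ Ioc 0 b, HasDerivAt p ((c * x⁻¹ - φ x) * p x) x)
    (hp : ∀ x ∈ Ioc 0 b, 0 ≤ p x)
    (hfisher : IntegrableOn (fun x => x * φ x ^ 2 * p x) (Ioc 0 b)) :
    IntegrableOn (fun x => x⁻¹ * p x) (Ioc 0 b) := by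
  set a : ℕ → ℝ := fun k => b / (k + 1)
  have ha : ∀ k, 0 < a k := fun k => by positivity
  have hab : ∀ k, a k ≤ b := fun k => div_le_self hb.le (by simp)
  refine integrableOn_Ioc_of_intervalIntegral_norm_bounded_left (l := atTop)
    (I := 2 / c * (p b + (2 * c)⁻¹ * ∫ x in Ioc 0 b, x * φ x ^ 2 * p x))
    (fun k => (integrableOn_inv_mul_Icc hderiv (ha k)).mono_set Ioc_subset_Icc_self) ?_
    (Eventually.of_forall fun k => ?_)
  · simpa [a, div_eq_mul_one_div b] using tendsto_one_div_add_atTop_nhds_zero_nat.const_mul b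
  · have hnorm : ∫ x in Ioc (a k) b, ‖x⁻¹ * p x‖ = ∫ x in a k..b, x⁻¹ * p x := by
      rw [intervalIntegral.integral_of_le (hab k)]
      refine setIntegral_congr_fun measurableSet_Ioc fun x hx => ?_
      have hx0 : 0 < x := (ha k).trans hx.1
      exact Real.norm_of_nonneg (mul_nonneg (inv_nonneg.2 hx0.le) (hp x ⟨hx0, hx.2⟩))
    rw [hnorm, div_mul_eq_mul_div, le_div_iff₀ hc]
    linarith [mul_intervalIntegral_inv_mul_le hc hderiv hp hfisher (ha k) (hab k)]

theorem integrableOn_inv_mul_Ioi_of_integrableOn_fisher (hc : 0 < c)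
    (hderiv : ∀ x ∈ Ioi 0, HasDerivAt p ((c * x⁻¹ - φ x) * p x) x)
    (hp : ∀ x ∈ Ioi 0, 0 ≤ p x) (hint : IntegrableOn p (Ioi 0))
    (hfisher : IntegrableOn (fun x => x * φ x ^ 2 * p x) (Ioi 0)) :
    IntegrableOn (fun x => x⁻¹ * p x) (Ioi 0) := by
  rw [← Ioc_union_Ioi_eq_Ioi zero_le_one] at hint hfisher ⊢
  exact (integrableOn_inv_mul_Ioc_of_integrableOn_fisher hc one_pos
    (fun x hx => hderiv x hx.1) (fun x hx => hp x hx.1) hfisher.left_of_union).union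
    (integrableOn_inv_mul_Ioi_of_integrableOn one_pos hint.right_of_union)

end InverseMoment

theorem unbounded_fisher_of_unbounded_inv_moment_general
    (M : ℕ) (hM : 2 ≤ M) (g : ℝ → ℝ)
    (hg_pos : ∀ Q ∈ Ioi (0 : ℝ), 0 < g Q)
    (hg_diff : ∀ Q ∈ Ioi (0 : ℝ), DifferentiableAt ℝ g Q)
    (δ : ℝ)
    (hδ_fin : IntegrableOn (fun t => t ^ (M - 1) * g t) (Ioi 0))
    (p φ : ℝ → ℝ)
    (hp : ∀ Q, p Q = δ⁻¹ * Q ^ (M - 1) * g Q)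
    (hφ : ∀ Q, φ Q = -(deriv g Q) / g Q)
    (hdiv : ¬ IntegrableOn (fun Q => Q⁻¹ * p Q) (Ioi 0)) :
    ¬ IntegrableOn (fun Q => Q * φ Q ^ 2 * p Q) (Ioi 0) := by
  set f : ℝ → ℝ := fun t => t ^ (M - 1) * g t
  have hδ : IsUnit δ⁻¹ := isUnit_iff_ne_zero.2 fun hδ0 => hdiv (by simp [hp, hδ0])
  have hp_eq : ∀ Q, p Q = δ⁻¹ * f Q := fun Q => by rw [hp, mul_assoc]
  have hinv_eq : (fun Q => Q⁻¹ * p Q) = fun Q => δ⁻¹ * (Q⁻¹ * f Q) := by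
    ext Q; rw [hp_eq]; ring
  have hfisher_eq : (fun Q => Q * φ Q ^ 2 * p Q) = fun Q => δ⁻¹ * (Q * φ Q ^ 2 * f Q) := by
    ext Q; rw [hp_eq]; ring
  rw [hinv_eq, IntegrableOn, integrable_const_mul_iff hδ] at hdiv
  rw [hfisher_eq, IntegrableOn, integrable_const_mul_iff hδ]
  refine fun hfisher => hdiv <| integrableOn_inv_mul_Ioi_of_integrableOn_fisher
    (c := ((M - 1 : ℕ) : ℝ)) (by norm_cast; omega) (fun x hx => ?_)
    (fun x hx => (mul_pos (pow_pos hx _) (hg_pos x hx)).le) hδ_fin hfisher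
  simpa only [hφ] using hasDerivAt_pow_mul (M - 1) hx (hg_diff x hx) (hg_pos x hx).ne'

/-- If the density `p Q = δ⁻¹ Q^(M-1) g Q` on `(0,∞)` satisfies `E[Q⁻¹] = ∞`,
then `E[Q φ(Q)²] = ∞`, where `φ = -g'/g`. -/
theorem unbounded_fisher_of_unbounded_inv_moment
    (M : ℕ) (hM : 2 ≤ M) (g : ℝ → ℝ)
    (hg_pos : ∀ Q ∈ Ioi (0 : ℝ), 0 < g Q)
    (hg_diff : ∀ Q ∈ Ioi (0 : ℝ), DifferentiableAt ℝ g Q)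
    (δ : ℝ) (hδ : δ = ∫ t in Ioi (0 : ℝ), t ^ (M - 1) * g t)
    (hδ_fin : IntegrableOn (fun t => t ^ (M - 1) * g t) (Ioi 0))
    (p φ : ℝ → ℝ)
    (hp : ∀ Q, p Q = δ⁻¹ * Q ^ (M - 1) * g Q)
    (hφ : ∀ Q, φ Q = -(deriv g Q) / g Q)
    (hp_top : Tendsto p atTop (nhds 0))
    (hdiv : ¬ IntegrableOn (fun Q => Q⁻¹ * p Q) (Ioi 0)) :
    ¬ IntegrableOn (fun Q => Q * φ Q ^ 2 * p Q) (Ioi 0) :=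
  unbounded_fisher_of_unbounded_inv_moment_general M hM g hg_pos hg_diff δ hδ_fin p φ hp hφ hdiv
end

section
/- For a real number a > 1 and all z > 0, K_a(z)/K_{a-1}(z) > ((a-1)/a)^{1/2} + (a-1)/z, where K_a is the modified Bessel function of the second kind. -/
open Real Set MeasureTheory

/-- The modified Bessel function of the second kind, via its integral representation. -/
noncomputable def besselK (ν z : ℝ) : ℝ :=
  ∫ t in Ioi (0 : ℝ), Real.exp (-z * Real.cosh t) * Real.cosh (ν * t)

/-!
Integrating `e^{-z cosh t} sinh (ν t)` by parts gives the recurrence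
`z (K_{ν+1} - K_{ν-1}) = 2ν K_ν`, while `cosh ((ν+1)t) + cosh ((ν-1)t) = 2 cosh (ν t) cosh t`
with `cosh t > 1` gives `2 K_ν < K_{ν+1} + K_{ν-1}`. Together they yield
`K_{ν+1}(z) / K_ν(z) > 1 + ν/z` for every real `ν`, which is stronger than the claim since
`√((a-1)/a) < 1`.
-/

open Filter Topology Asymptotics

lemma cosh_le_exp_abs (x : ℝ) : cosh x ≤ exp |x| := by
  rw [← cosh_abs, cosh_eq]
  linarith [exp_le_exp.2 (neg_le_self (abs_nonneg x))]

lemma abs_sinh_le_cosh (x : ℝ) : |sinh x| ≤ cosh x := by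
  rw [abs_sinh, ← cosh_abs]
  exact (sinh_lt_cosh _).le

lemma tendsto_exp_mul_sub_mul_cosh_atTop {z : ℝ} (c : ℝ) (hz : 0 < z) :
    Tendsto (fun t => exp (c * t - z * cosh t)) atTop (𝓝 0) := by
  have h := (tendsto_rpow_mul_exp_neg_mul_atTop_nhds_zero c (z / 2) (by positivity)).comp
    tendsto_exp_atTop
  refine squeeze_zero (fun t => (exp_pos _).le) (fun t => ?_) h
  have hcosh : exp t / 2 ≤ cosh t := by rw [cosh_eq]; linarith [exp_pos (-t)]
  rw [Function.comp_apply, ← exp_mul, ← exp_add]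
  gcongr
  nlinarith

lemma exp_neg_mul_cosh_mul_cosh_le (ν z : ℝ) {t : ℝ} (ht : 0 ≤ t) :
    exp (-z * cosh t) * cosh (ν * t) ≤ exp (|ν| * t - z * cosh t) := by
  calc exp (-z * cosh t) * cosh (ν * t) ≤ exp (-z * cosh t) * exp |ν * t| := by
        gcongr; exact cosh_le_exp_abs _
    _ = exp (|ν| * t - z * cosh t) := by
        rw [← exp_add, abs_mul, abs_of_nonneg ht]; ring_nf

lemma integrableOn_besselK_integrand (ν : ℝ) {z : ℝ} (hz : 0 < z) :
    IntegrableOn (fun t => exp (-z * cosh t) * cosh (ν * t)) (Ioi 0) := by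
  refine integrable_of_isBigO_exp_neg one_pos (by fun_prop) ?_
  have hbdd := (tendsto_exp_mul_sub_mul_cosh_atTop (|ν| + 1) hz).isBigO_one ℝ
  refine IsBigO.trans ?_ ((hbdd.mul (isBigO_refl (fun t => exp (-1 * t)) atTop)).congr_right
    fun t => one_mul _)
  refine IsBigO.of_bound 1 ?_
  filter_upwards [eventually_ge_atTop 0] with t ht
  rw [one_mul, norm_of_nonneg (by positivity), norm_of_nonneg (by positivity), ← exp_add]
  convert exp_neg_mul_cosh_mul_cosh_le ν z ht using 2
  ring

lemma tendsto_exp_neg_mul_cosh_mul_sinh_atTop (ν : ℝ) {z : ℝ} (hz : 0 < z) :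
    Tendsto (fun t => exp (-z * cosh t) * sinh (ν * t)) atTop (𝓝 0) := by
  refine squeeze_zero_norm' ?_ (tendsto_exp_mul_sub_mul_cosh_atTop |ν| hz)
  filter_upwards [eventually_ge_atTop 0] with t ht
  rw [norm_mul, norm_of_nonneg (exp_pos _).le, norm_eq_abs]
  exact (mul_le_mul_of_nonneg_left (abs_sinh_le_cosh _) (exp_pos _).le).trans
    (exp_neg_mul_cosh_mul_cosh_le ν z ht)

lemma setIntegral_Ioi_pos {f : ℝ → ℝ} {a : ℝ} (hf : ∀ t ∈ Ioi a, 0 < f t)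
    (hint : IntegrableOn f (Ioi a)) : 0 < ∫ t in Ioi a, f t := by
  rw [setIntegral_pos_iff_support_of_nonneg_ae
    ((ae_restrict_iff' measurableSet_Ioi).2 (ae_of_all _ fun t ht => (hf t ht).le)) hint]
  have : Function.support f ∩ Ioi a = Ioi a :=
    inter_eq_right.2 fun t ht => (hf t ht).ne'
  simp [this]

lemma besselK_pos (ν : ℝ) {z : ℝ} (hz : 0 < z) : 0 < besselK ν z :=
  setIntegral_Ioi_pos (fun _ _ => by positivity) (integrableOn_besselK_integrand ν hz)

lemma cosh_add_one_mul_add_cosh_sub_one_mul (ν t : ℝ) :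
    cosh ((ν + 1) * t) + cosh ((ν - 1) * t) = 2 * cosh (ν * t) * cosh t := by
  rw [add_mul, sub_mul, one_mul, cosh_add, cosh_sub]; ring

lemma cosh_add_one_mul_sub_cosh_sub_one_mul (ν t : ℝ) :
    cosh ((ν + 1) * t) - cosh ((ν - 1) * t) = 2 * sinh (ν * t) * sinh t := by
  rw [add_mul, sub_mul, one_mul, cosh_add, cosh_sub]; ring

lemma mul_besselK_add_one_sub_besselK_sub_one (ν : ℝ) {z : ℝ} (hz : 0 < z) :
    z * (besselK (ν + 1) z - besselK (ν - 1) z) = 2 * ν * besselK ν z := by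
  have hI (μ : ℝ) := integrableOn_besselK_integrand μ hz
  have hdiff : IntegrableOn (fun t => z / 2 *
      (exp (-z * cosh t) * cosh ((ν + 1) * t) - exp (-z * cosh t) * cosh ((ν - 1) * t)))
      (Ioi 0) :=
    ((hI _).sub (hI _)).const_mul _
  have hderiv (t : ℝ) : HasDerivAt (fun t => exp (-z * cosh t) * sinh (ν * t))
      (ν * (exp (-z * cosh t) * cosh (ν * t)) - z / 2 *
        (exp (-z * cosh t) * cosh ((ν + 1) * t) - exp (-z * cosh t) * cosh ((ν - 1) * t))) t := by
    refine (((hasDerivAt_cosh t).const_mul (-z)).exp.mul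
      ((hasDerivAt_id' t).const_mul ν).sinh).congr_deriv ?_
    rw [← mul_sub, cosh_add_one_mul_sub_cosh_sub_one_mul]
    ring
  have h := integral_Ioi_of_hasDerivAt_of_tendsto (hderiv 0).continuousAt.continuousWithinAt
    (fun t _ => hderiv t) (((hI ν).const_mul ν).sub hdiff)
    (tendsto_exp_neg_mul_cosh_mul_sinh_atTop ν hz)
  rw [integral_sub ((hI ν).const_mul ν) hdiff, integral_const_mul, integral_const_mul,
    integral_sub (hI _) (hI _)] at h
  simp only [besselK, mul_zero, sinh_zero, sub_zero] at h ⊢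
  linarith

lemma two_mul_besselK_lt_besselK_add_one_add_besselK_sub_one (ν : ℝ) {z : ℝ} (hz : 0 < z) :
    2 * besselK ν z < besselK (ν + 1) z + besselK (ν - 1) z := by
  have hI (μ : ℝ) := integrableOn_besselK_integrand μ hz
  have hsum : IntegrableOn
      (fun t => exp (-z * cosh t) * cosh ((ν + 1) * t) + exp (-z * cosh t) * cosh ((ν - 1) * t))
      (Ioi 0) :=
    (hI _).add (hI _)
  have hpos : 0 < ∫ t in Ioi 0, (exp (-z * cosh t) * cosh ((ν + 1) * t) +
      exp (-z * cosh t) * cosh ((ν - 1) * t) - 2 * (exp (-z * cosh t) * cosh (ν * t))) := by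
    refine setIntegral_Ioi_pos (fun t ht => ?_) (hsum.sub ((hI _).const_mul 2))
    have hcosh : 1 < cosh t := one_lt_cosh.2 (ne_of_gt ht)
    rw [← mul_add, cosh_add_one_mul_add_cosh_sub_one_mul]
    nlinarith [mul_pos (exp_pos (-z * cosh t)) (cosh_pos (ν * t))]
  rw [integral_sub hsum ((hI _).const_mul 2), integral_add (hI _) (hI _),
    integral_const_mul] at hpos
  simp only [besselK]
  linarith

lemma add_mul_besselK_lt_mul_besselK_add_one (ν : ℝ) {z : ℝ} (hz : 0 < z) :
    (z + ν) * besselK ν z < z * besselK (ν + 1) z := by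
  have hrec := mul_besselK_add_one_sub_besselK_sub_one ν hz
  have hconv := mul_lt_mul_of_pos_left
    (two_mul_besselK_lt_besselK_add_one_add_besselK_sub_one ν hz) hz
  linarith

lemma one_add_div_lt_besselK_add_one_div_besselK (ν : ℝ) {z : ℝ} (hz : 0 < z) :
    1 + ν / z < besselK (ν + 1) z / besselK ν z := by
  rw [lt_div_iff₀ (besselK_pos ν hz), one_add_div hz.ne', div_mul_eq_mul_div, div_lt_iff₀ hz,
    mul_comm _ z]
  exact add_mul_besselK_lt_mul_besselK_add_one ν hz

/-- For `a > 1` and `z > 0`: `K_a(z)/K_{a-1}(z) > √((a-1)/a) + (a-1)/z`. -/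
theorem besselK_ratio_lower_bound (a : ℝ) (ha : 1 < a) (z : ℝ) (hz : 0 < z) :
    besselK a z / besselK (a - 1) z > Real.sqrt ((a - 1) / a) + (a - 1) / z := by
  have hratio := one_add_div_lt_besselK_add_one_div_besselK (a - 1) hz
  rw [sub_add_cancel] at hratio
  have hsqrt : √((a - 1) / a) < 1 :=
    (sqrt_lt' one_pos).2 (by rw [one_pow, div_lt_one (by linarith)]; linarith)
  linarith
end
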